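/- Let r* ∈ [0,1]^m, let C ⊆ [n] be nonempty, let A*_i ∈ [0,1]^m for i ∈ C, and suppose the Lipschitz ratings assumption holds with constant L > 0: r*_j − r*_{j'} ≤ (L/|C|)·Σ_{i∈C}(A*_{ij} − A*_{ij'}) for all j ∈ Q_β(r*), j' ∉ Q_β(r*). Let Ā = (1/|C|)·Σ_{i∈C} A*_i, and assume Q_β(Ā) = Q_β(r*). Then for every vector w ∈ [0,1]^m with Σ_{j∈[m]} w_j = 1 and w_j ≤ 1/(βm) for all j, it holds that (1/(βm))·Σ_{j∈Q_β(r*)} r*_j − Σ_{j∈[m]} w_j·r*_j ≤ L·[ (1/(βm))·Σ_{j∈Q_β(r*)} Ā_j − Σ_{j∈[m]} w_j·Ā_j ]. In particular, probability vectors w that are spread over at least βm coordinates and are near-optimal with respect to the average good rating Ā are also near-optimal (up to the factor L) with respect to r*. -/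
import Mathlib


open scoped BigOperators

/-- `Q` is a β-quantile of `v` of size `b`: it consists of `b` coordinates on which `v`
is largest. -/
def IsQuantile {m : ℕ} (b : ℕ) (v : Fin m → ℝ) (Q : Finset (Fin m)) : Prop :=
  Q.card = b ∧ ∀ j ∈ Q, ∀ j' ∉ Q, v j' ≤ v j

/-- **Key consequence of the Lipschitz ratings assumption.**  If `r*` is `L`-Lipschitz
with respect to the average good rating `Ā = (1/|C|)·Σ_{i∈C} A*_i`, and `Ā` and `r*`
share the β-quantile `Q`, then every probability vector `w ∈ [0,1]^m` with `w_j ≤ 1/(βm)`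
satisfies
`(1/(βm))·Σ_{j∈Q} r*_j − Σ_j w_j r*_j ≤ L·[(1/(βm))·Σ_{j∈Q} Ā_j − Σ_j w_j Ā_j]`,
i.e. near-optimal spread-out solutions for `Ā` are near-optimal for `r*` up to `L`. -/
theorem lipschitz_transfer
    (n m b : ℕ) (β L : ℝ)
    (C : Finset (Fin n)) (Astar : Matrix (Fin n) (Fin m) ℝ)
    (rstar : Fin m → ℝ) (Q : Finset (Fin m)) (w : Fin m → ℝ)
    (hm : 0 < m) (hβ0 : 0 < β) (hβ1 : β < 1) (hb : (b : ℝ) = β * m)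
    (hC : C.Nonempty)
    (hL : 0 < L)
    (hrstar : ∀ j, rstar j ∈ Set.Icc (0 : ℝ) 1)
    (hAstar : ∀ i ∈ C, ∀ j, Astar i j ∈ Set.Icc (0 : ℝ) 1)
    -- Lipschitz ratings assumption with constant L
    (hLip : ∀ j ∈ Q, ∀ j' ∉ Q,
      rstar j - rstar j' ≤ (L / (C.card : ℝ)) * ∑ i ∈ C, (Astar i j - Astar i j'))
    -- Q is the β-quantile of both r* and of Ā
    (hQr : IsQuantile b rstar Q)
    (hQA : IsQuantile b (fun j => (1 / (C.card : ℝ)) * ∑ i ∈ C, Astar i j) Q)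
    -- w is a probability vector spread over at least βm coordinates
    (hw01 : ∀ j, w j ∈ Set.Icc (0 : ℝ) 1)
    (hwsum : ∑ j, w j = 1)
    (hwmax : ∀ j, w j ≤ 1 / (β * m)) :
    (1 / (β * m)) * ∑ j ∈ Q, rstar j - ∑ j, w j * rstar j ≤
      L * ((1 / (β * m)) * ∑ j ∈ Q, ((1 / (C.card : ℝ)) * ∑ i ∈ C, Astar i j) -
        ∑ j, w j * ((1 / (C.card : ℝ)) * ∑ i ∈ C, Astar i j)) := by
  classical
  have hβm : (0:ℝ) < β * m := by positivity
  set Abar : Fin m → ℝ := fun j => (1 / (C.card : ℝ)) * ∑ i ∈ C, Astar i j with hAbar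
  set a : Fin m → ℝ := fun j => 1 / (β * m) - w j with ha
  have ha0 : ∀ j, 0 ≤ a j := fun j => sub_nonneg.mpr (hwmax j)
  have hw0 : ∀ j, 0 ≤ w j := fun j => (hw01 j).1
  -- decomposition of the "regret" for any f
  have key : ∀ f : Fin m → ℝ,
      (1 / (β * m)) * ∑ j ∈ Q, f j - ∑ j, w j * f j
        = ∑ j ∈ Q, a j * f j - ∑ j ∈ Qᶜ, w j * f j := by
    intro f
    have hsplit : ∑ j, w j * f j = ∑ j ∈ Q, w j * f j + ∑ j ∈ Qᶜ, w j * f j :=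
      (Finset.sum_add_sum_compl Q _).symm
    rw [hsplit, Finset.mul_sum]
    have : ∑ j ∈ Q, a j * f j = ∑ j ∈ Q, (1 / (β * m)) * f j - ∑ j ∈ Q, w j * f j := by
      rw [← Finset.sum_sub_distrib]
      exact Finset.sum_congr rfl fun j _ => by simp [ha]; ring
    rw [this]; ring
  -- the common total mass
  have hS : ∑ j ∈ Q, a j = ∑ j ∈ Qᶜ, w j := by
    have h1 : ∑ j ∈ Q, w j + ∑ j ∈ Qᶜ, w j = 1 := by
      rw [Finset.sum_add_sum_compl]; exact hwsum
    have h2 : ∑ j ∈ Q, a j = (b : ℝ) * (1 / (β * m)) - ∑ j ∈ Q, w j := by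
      rw [← hQr.1]
      simp [ha, Finset.sum_sub_distrib, Finset.sum_const, nsmul_eq_mul]
    rw [h2, hb, mul_one_div, div_self hβm.ne']
    linarith
  set S : ℝ := ∑ j ∈ Qᶜ, w j with hSdef
  have hS0 : 0 ≤ S := Finset.sum_nonneg fun j _ => hw0 j
  -- double sum identity
  have dsum : ∀ f : Fin m → ℝ,
      ∑ j ∈ Q, ∑ j' ∈ Qᶜ, a j * w j' * (f j - f j')
        = S * (∑ j ∈ Q, a j * f j - ∑ j' ∈ Qᶜ, w j' * f j') := by
    intro f
    have : ∀ j ∈ Q, ∑ j' ∈ Qᶜ, a j * w j' * (f j - f j')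
        = a j * f j * S - a j * ∑ j' ∈ Qᶜ, w j' * f j' := by
      intro j _
      rw [hSdef, Finset.mul_sum, Finset.mul_sum, ← Finset.sum_sub_distrib]
      exact Finset.sum_congr rfl fun j' _ => by ring
    rw [Finset.sum_congr rfl this, Finset.sum_sub_distrib, ← Finset.sum_mul,
      ← Finset.sum_mul, hS]
    ring
  -- pointwise Lipschitz comparison
  have hpt : ∀ j ∈ Q, ∀ j' ∈ Qᶜ,
      a j * w j' * (rstar j - rstar j') ≤ a j * w j' * (L * (Abar j - Abar j')) := by
    intro j hj j' hj'
    have hj'Q : j' ∉ Q := Finset.mem_compl.mp hj'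
    have h1 := hLip j hj j' hj'Q
    have hCc : (0:ℝ) < (C.card : ℝ) := by
      exact_mod_cast Finset.card_pos.mpr hC
    have h2 : (L / (C.card : ℝ)) * ∑ i ∈ C, (Astar i j - Astar i j')
        = L * (Abar j - Abar j') := by
      simp only [hAbar, Finset.sum_sub_distrib]
      field_simp
    exact mul_le_mul_of_nonneg_left (h2 ▸ h1) (mul_nonneg (ha0 j) (hw0 j'))
  have hmain : S * (∑ j ∈ Q, a j * rstar j - ∑ j' ∈ Qᶜ, w j' * rstar j')
      ≤ S * (L * (∑ j ∈ Q, a j * Abar j - ∑ j' ∈ Qᶜ, w j' * Abar j')) := by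
    have := Finset.sum_le_sum (fun j hj => Finset.sum_le_sum (hpt j hj))
    rw [dsum rstar] at this
    have h2 : ∑ j ∈ Q, ∑ j' ∈ Qᶜ, a j * w j' * (L * (Abar j - Abar j'))
        = S * (L * (∑ j ∈ Q, a j * Abar j - ∑ j' ∈ Qᶜ, w j' * Abar j')) := by
      have := dsum Abar
      calc ∑ j ∈ Q, ∑ j' ∈ Qᶜ, a j * w j' * (L * (Abar j - Abar j'))
          = L * ∑ j ∈ Q, ∑ j' ∈ Qᶜ, a j * w j' * (Abar j - Abar j') := by
            rw [Finset.mul_sum]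
            exact Finset.sum_congr rfl fun j _ => by
              rw [Finset.mul_sum]
              exact Finset.sum_congr rfl fun j' _ => by ring
        _ = S * (L * (∑ j ∈ Q, a j * Abar j - ∑ j' ∈ Qᶜ, w j' * Abar j')) := by
            rw [this]; ring
    rw [h2] at this
    exact this
  rw [key rstar, key Abar]
  rcases eq_or_lt_of_le hS0 with hSz | hSpos
  · -- S = 0: both sides are 0
    have hwz : ∀ j ∈ Qᶜ, w j = 0 := by
      intro j hj
      have := (Finset.sum_eq_zero_iff_of_nonneg (fun j _ => hw0 j)).mp hSz.symm
      exact this j hj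
    have haz : ∀ j ∈ Q, a j = 0 := by
      have : ∑ j ∈ Q, a j = 0 := by rw [hS]; exact hSz.symm
      exact fun j hj => (Finset.sum_eq_zero_iff_of_nonneg (fun j _ => ha0 j)).mp this j hj
    have e1 : ∑ j ∈ Q, a j * rstar j = 0 :=
      Finset.sum_eq_zero fun j hj => by rw [haz j hj, zero_mul]
    have e2 : ∑ j ∈ Qᶜ, w j * rstar j = 0 :=
      Finset.sum_eq_zero fun j hj => by rw [hwz j hj, zero_mul]
    have e3 : ∑ j ∈ Q, a j * Abar j = 0 :=
      Finset.sum_eq_zero fun j hj => by rw [haz j hj, zero_mul]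
    have e4 : ∑ j ∈ Qᶜ, w j * Abar j = 0 :=
      Finset.sum_eq_zero fun j hj => by rw [hwz j hj, zero_mul]
    rw [e1, e2, e3, e4]; simp
  · exact le_of_mul_le_mul_left hmain hSpos
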